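/- arXiv:1502.05500 — 2 statements merged into one kernel-verified Lean document; each statement's English description precedes it below -/
import Mathlib

section
/- For every integer k ≥ 2, the poset P_*^k has precalibre-ℵ₁ and has cardinality ℵ₁. -/
/-- The type of countable ordinals, representing `ω₁`. -/
abbrev O1 : Type 1 := {o : Ordinal // o < Ordinal.omega 1}

/-- A condition of the poset `P_*^k`: a triple `(u, A, h)` where `u` is a finite
subset of `ω₁`, `A` is a set of `(k+1)`-element subsets of `u`, and `h` is a
function from `℘ = {v ⊆ u : no (k+1)-element subset of v belongs to A}` to `ω`
(coded as an `Option ℕ`-valued function whose domain is exactly `℘`) such that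
whenever `h` is constant on `w₀, …, w_{k-1} ∈ ℘`, then `w₀ ∪ … ∪ w_{k-1} ∈ ℘`. -/
structure PStar (k : ℕ) : Type 1 where
  u : Finset O1
  A : Finset (Finset O1)
  h : Finset O1 → Option ℕ
  hA : ∀ a ∈ A, a ⊆ u ∧ a.card = k + 1
  hdom : ∀ v : Finset O1, (h v).isSome ↔
    (v ⊆ u ∧ ∀ a : Finset O1, a.card = k + 1 → a ⊆ v → a ∉ A)
  hlin : ∀ (w : Fin k → Finset O1) (n : ℕ), (∀ i, h (w i) = some n) →
    (h (Finset.univ.biUnion w)).isSome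

/-- The order of `P_*^k`: `p ≤ q` iff `u_q ⊆ u_p`, `A_q = A_p ∩ [u_q]^{k+1}`, and
`h_q ⊆ h_p`. -/
def PStar.le {k : ℕ} (p q : PStar k) : Prop :=
  q.u ⊆ p.u ∧ (∀ a : Finset O1, a ∈ q.A ↔ a ∈ p.A ∧ a ⊆ q.u) ∧
  ∀ v : Finset O1, (q.h v).isSome → p.h v = q.h v

/-- Precalibre-`ℵ₁` for a poset with order relation `le`: every uncountable subset
has an uncountable subset every finite subset of which has a common lower bound. -/
def Precalibre {Q : Type*} (le : Q → Q → Prop) : Prop :=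
  ∀ S : Set Q, ¬S.Countable → ∃ S' : Set Q, S' ⊆ S ∧ ¬S'.Countable ∧
    ∀ t : Finset Q, ↑t ⊆ S' → ∃ q : Q, ∀ p ∈ t, le q p

/-!
Δ-system argument. Among uncountably many conditions, the Δ-system lemma and the pigeonhole
principle find uncountably many whose bases `u_p` form a Δ-system with root `r` and which are
all isomorphic via the relabellings of their bases by natural numbers, with these isomorphisms
fixing `r` pointwise: over `r` there are only countably many isomorphism types. Finitely many
such conditions amalgamate: take the unions of the bases and of the `A`s, keep `h` on sets inside
one base, and give every other set of the new `℘` a fresh value of its own. The closure condition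
for a common old value is checked inside a single condition `q`, after moving the sets there
along the isomorphisms, which fix the points shared with `u_q`. For the cardinality, a condition
is determined by its base and its relabelled shape, which ranges over a countable set, and there
are `ℵ₁` bases.
-/

section DeltaSystem

open Set

variable {α β : Type*}

theorem exists_not_countable_fiber [Countable β] {S : Set α} (hS : ¬S.Countable)
    (f : α → β) : ∃ b, ¬{x ∈ S | f x = b}.Countable := by
  by_contra! h
  refine hS ((countable_iUnion h).mono fun x hx => ?_)
  exact mem_iUnion.2 ⟨f x, hx, rfl⟩

theorem exists_pairwiseDisjoint_not_countable {T : Set (Finset α)} (hT : ¬T.Countable)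
    (hx : ∀ x, {s ∈ T | x ∈ s}.Countable) :
    ∃ T' ⊆ T, ¬T'.Countable ∧ T'.PairwiseDisjoint id := by
  -- a maximal disjoint subfamily `M` works: every nonempty member of `T` meets `⋃ M`
  obtain ⟨M, hmax⟩ := zorn_subset {M | M ⊆ T ∧ M.PairwiseDisjoint id}
    fun c hc hchain => ⟨⋃₀ c, ⟨sUnion_subset fun M hM => (hc hM).1,
      (pairwiseDisjoint_sUnion hchain.directedOn).2 fun M hM => (hc hM).2⟩,
      fun _ => subset_sUnion_of_mem⟩
  obtain ⟨hMT, hM⟩ := hmax.prop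
  refine ⟨M, hMT, fun hMc => hT ?_, hM⟩
  have hmeet : ∀ s ∈ T, s.Nonempty → ∃ m ∈ M, ¬Disjoint s m := by
    intro s hs hne
    by_cases hsM : s ∈ M
    · exact ⟨s, hsM, by simpa using hne.ne_empty⟩
    by_contra! hdisj
    exact hsM (hmax.mem_of_prop_insert ⟨insert_subset hs hMT,
      hM.insert fun m hm _ => hdisj m hm⟩)
  refine ((countable_singleton ∅).union (hMc.biUnion fun m _ =>
    m.countable_toSet.biUnion fun x _ => hx x)).mono fun s hs => ?_
  rcases s.eq_empty_or_nonempty with rfl | hne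
  · exact Or.inl rfl
  obtain ⟨m, hm, hsm⟩ := hmeet s hs hne
  obtain ⟨x, hxs, hxm⟩ := Finset.not_disjoint_iff.1 hsm
  exact Or.inr (mem_biUnion hm (mem_biUnion hxm ⟨hs, hxs⟩))

variable [DecidableEq α]

def IsDeltaSystem (T : Set (Finset α)) (r : Finset α) : Prop :=
  T.Pairwise fun s s' => s ∩ s' = r

theorem IsDeltaSystem.of_image_erase {T : Set (Finset α)} {x : α} {r : Finset α}
    (hx : ∀ s ∈ T, x ∈ s) (hinj : InjOn (·.erase x) T)
    (h : IsDeltaSystem ((·.erase x) '' T) r) : IsDeltaSystem T (insert x r) := by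
  intro s hs s' hs' hne
  rw [← h (mem_image_of_mem _ hs) (mem_image_of_mem _ hs') (hinj.ne hs hs' hne),
    Finset.erase_inter, Finset.inter_erase, Finset.erase_idem,
    Finset.insert_erase (Finset.mem_inter.2 ⟨hx s hs, hx s' hs'⟩)]

theorem exists_isDeltaSystem_of_card_eq (n : ℕ) {T : Set (Finset α)}
    (hcard : ∀ s ∈ T, s.card = n) (hT : ¬T.Countable) :
    ∃ T' ⊆ T, ¬T'.Countable ∧ ∃ r, IsDeltaSystem T' r := by
  induction n generalizing T with
  | zero =>
    refine absurd ((countable_singleton ∅).mono fun s hs => ?_) hT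
    exact Finset.card_eq_zero.1 (hcard s hs)
  | succ n ih =>
    by_cases hx : ∀ x, {s ∈ T | x ∈ s}.Countable
    · obtain ⟨T', hT'T, hT', hdisj⟩ := exists_pairwiseDisjoint_not_countable hT hx
      exact ⟨T', hT'T, hT', ∅, fun s hs s' hs' hne =>
        Finset.disjoint_iff_inter_eq_empty.1 (hdisj hs hs' hne)⟩
    push Not at hx
    obtain ⟨x, hTx⟩ := hx
    set Tx := {s ∈ T | x ∈ s}
    have hinj : InjOn (·.erase x) Tx := fun s hs s' hs' h => by
      rw [← Finset.insert_erase hs.2, ← Finset.insert_erase hs'.2]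
      exact congrArg (insert x) h
    obtain ⟨T₂, hT₂, hT₂c, r, hr⟩ := ih (T := (·.erase x) '' Tx)
      (by rintro _ ⟨s, hs, rfl⟩; simp [Finset.card_erase_of_mem hs.2, hcard s hs.1])
      fun hc => hTx ((mapsTo_image _ _).countable_of_injOn hinj hc)
    have himage : (·.erase x) '' (Tx ∩ (·.erase x) ⁻¹' T₂) = T₂ := by
      rw [image_inter_preimage, inter_eq_right.2 hT₂]
    refine ⟨Tx ∩ (·.erase x) ⁻¹' T₂, fun s hs => hs.1.1,
      fun hc => hT₂c (himage ▸ hc.image _), insert x r,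
      IsDeltaSystem.of_image_erase (fun s hs => hs.1.2) (hinj.mono inter_subset_left)
        (by rwa [himage])⟩

theorem exists_isDeltaSystem {T : Set (Finset α)} (hT : ¬T.Countable) :
    ∃ T' ⊆ T, ¬T'.Countable ∧ ∃ r, IsDeltaSystem T' r := by
  obtain ⟨n, hn⟩ := exists_not_countable_fiber hT Finset.card
  obtain ⟨T', hT'T, hT'⟩ := exists_isDeltaSystem_of_card_eq n (fun s hs => hs.2) hn
  exact ⟨T', hT'T.trans (sep_subset _ _), hT'⟩

end DeltaSystem

open Finset Cardinal

section Label

variable {α : Type*} [DecidableEq α]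

noncomputable def label (u : Finset α) (x : α) : ℕ :=
  u.toList.idxOf x

theorem label_injOn (u : Finset α) : Set.InjOn (label u) u :=
  fun _ hx _ _ h => (List.idxOf_inj (mem_toList.2 hx)).1 h

noncomputable def unlabel (u : Finset α) (s : Finset ℕ) : Finset α :=
  {x ∈ u | label u x ∈ s}

theorem unlabel_image_label {u v : Finset α} (hv : v ⊆ u) :
    unlabel u (v.image (label u)) = v := by
  ext x
  simp only [unlabel, mem_filter, mem_image]
  refine ⟨fun ⟨hxu, y, hyv, hyx⟩ => label_injOn u (hv hyv) hxu hyx ▸ hyv,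
    fun hxv => ⟨hv hxv, x, hxv, rfl⟩⟩

end Label

theorem mk_O1 : #O1 = ℵ₁ := by
  rw [show #O1 = #(Set.Iio (Ordinal.omega 1)) from rfl, mk_Iio_ordinal, Ordinal.card_omega,
    lift_aleph, Ordinal.lift_one]

instance : Infinite O1 := Cardinal.infinite_iff.2 (mk_O1 ▸ aleph0_le_aleph 1)

namespace PStar

variable {k : ℕ}

theorem ext {p q : PStar k} (hu : p.u = q.u) (hA : p.A = q.A) (hh : p.h = q.h) : p = q := by
  cases p; cases q; simp_all

theorem subset_u_of_isSome {p : PStar k} {v : Finset O1} (hv : (p.h v).isSome) : v ⊆ p.u :=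
  ((p.hdom v).1 hv).1

theorem subset_u_of_h_eq_some {p : PStar k} {v : Finset O1} {m : ℕ} (hv : p.h v = some m) :
    v ⊆ p.u :=
  subset_u_of_isSome (by simp [hv])

theorem h_eq_none_of_not_subset {p : PStar k} {v : Finset O1} (hv : ¬v ⊆ p.u) : p.h v = none :=
  Option.not_isSome_iff_eq_none.1 fun h => hv (subset_u_of_isSome h)

/-- The isomorphism type of `p`: conditions of equal shape are isomorphic via their labellings. -/
noncomputable def shape (p : PStar k) : Finset (Finset ℕ) × Finset (Finset ℕ × Option ℕ) :=
  (p.A.image (·.image (label p.u)), p.u.powerset.image fun v => (v.image (label p.u), p.h v))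

noncomputable def transport (p q : PStar k) (v : Finset O1) : Finset O1 :=
  unlabel q.u (v.image (label p.u))

section Transport

variable {p q : PStar k}

theorem h_transport (hs : p.shape = q.shape) {v : Finset O1} (hv : v ⊆ p.u) :
    q.h (transport p q v) = p.h v := by
  have : (v.image (label p.u), p.h v) ∈ q.shape.2 :=
    hs ▸ mem_image_of_mem _ (mem_powerset.2 hv)
  obtain ⟨v', hv', hv'v⟩ := mem_image.1 this
  obtain ⟨hlabel, hh⟩ := Prod.mk_inj.1 hv'v
  rw [transport, ← hlabel, unlabel_image_label (mem_powerset.1 hv'), hh]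

theorem transport_mem_A (hs : p.shape = q.shape) {a : Finset O1} (ha : a ∈ p.A) :
    transport p q a ∈ q.A := by
  have : a.image (label p.u) ∈ q.shape.1 := hs ▸ mem_image_of_mem _ ha
  obtain ⟨b, hb, hba⟩ := mem_image.1 this
  rwa [transport, ← hba, unlabel_image_label (q.hA b hb).1]

theorem transport_eq_self {v : Finset O1} (hv : v ⊆ q.u)
    (hlab : ∀ x ∈ v, label p.u x = label q.u x) : transport p q v = v := by
  rw [transport, Finset.image_congr hlab, unlabel_image_label hv]

/-- The labelling isomorphism from `p` to `q` exists and is the identity on `p.u ∩ q.u`. -/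
def Aligned (p q : PStar k) : Prop :=
  p.shape = q.shape ∧ ∀ x ∈ p.u, x ∈ q.u → label p.u x = label q.u x

theorem Aligned.symm (h : Aligned p q) : Aligned q p :=
  ⟨h.1.symm, fun x hxq hxp => (h.2 x hxp hxq).symm⟩

theorem aligned_of_u_eq (hu : p.u = q.u) (hs : p.shape = q.shape) : Aligned p q :=
  ⟨hs, fun x _ _ => by rw [hu]⟩

theorem Aligned.h_eq (h : Aligned p q) {v : Finset O1} (hvp : v ⊆ p.u) (hvq : v ⊆ q.u) :
    p.h v = q.h v := by
  rw [← h_transport h.1 hvp, transport_eq_self hvq fun x hx => h.2 x (hvp hx) (hvq hx)]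

theorem Aligned.mem_A (h : Aligned p q) {a : Finset O1} (ha : a ∈ p.A) (haq : a ⊆ q.u) :
    a ∈ q.A := by
  rw [← transport_eq_self haq fun x hx => h.2 x ((p.hA a ha).1 hx) (haq hx)]
  exact transport_mem_A h.1 ha

theorem Aligned.inter_subset_transport (h : Aligned p q) {v : Finset O1} (hv : v ⊆ p.u) :
    v ∩ q.u ⊆ transport p q v := fun x hx => by
  obtain ⟨hxv, hxq⟩ := mem_inter.1 hx
  exact mem_filter.2 ⟨hxq, h.2 x (hv hxv) hxq ▸ mem_image_of_mem _ hxv⟩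

theorem Aligned.eq_of_u_eq (h : Aligned p q) (hu : p.u = q.u) : p = q := by
  refine ext hu (Finset.ext fun a => ⟨fun ha => h.mem_A ha (hu ▸ (p.hA a ha).1),
    fun ha => h.symm.mem_A ha (hu ▸ (q.hA a ha).1)⟩) (funext fun v => ?_)
  by_cases hv : v ⊆ p.u
  · exact h.h_eq hv (hu ▸ hv)
  · rw [h_eq_none_of_not_subset hv, h_eq_none_of_not_subset (hu ▸ hv)]

theorem countable_setOf_u_eq (u₀ : Finset O1) : {p : PStar k | p.u = u₀}.Countable :=
  (Set.mapsTo_univ shape _).countable_of_injOn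
    (fun _ hp _ hq hs => (aligned_of_u_eq (hp.trans hq.symm) hs).eq_of_u_eq (hp.trans hq.symm))
    Set.countable_univ

end Transport

section Amalgam

variable (t : Finset (PStar k))

noncomputable def amalgamU : Finset O1 := t.sup PStar.u

noncomputable def amalgamA : Finset (Finset O1) := t.sup PStar.A

def AmalgamDom (v : Finset O1) : Prop :=
  v ⊆ amalgamU t ∧ ∀ a : Finset O1, a.card = k + 1 → a ⊆ v → a ∉ amalgamA t

noncomputable def freshBound : ℕ :=
  t.sup fun p => p.u.powerset.sup fun v => (p.h v).getD 0 + 1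

open Classical in
/-- Sets outside every base get pairwise distinct values above all old ones, so `h` can only be
constant on `k` such sets if they coincide. -/
noncomputable def amalgamH (v : Finset O1) : Option ℕ :=
  if AmalgamDom t v then
    if hv : ∃ p ∈ t, v ⊆ p.u then hv.choose.h v
    else some (freshBound t + label (amalgamU t).powerset v)
  else none

variable {t} {p : PStar k} {v : Finset O1} {n : ℕ}

theorem u_subset_amalgamU (hp : p ∈ t) : p.u ⊆ amalgamU t :=
  le_sup (f := PStar.u) hp

theorem mem_amalgamA {a : Finset O1} : a ∈ amalgamA t ↔ ∃ p ∈ t, a ∈ p.A :=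
  mem_sup

theorem lt_freshBound (hp : p ∈ t) (hv : p.h v = some n) : n < freshBound t :=
  calc n < (p.h v).getD 0 + 1 := by simp [hv]
    _ ≤ p.u.powerset.sup fun v => (p.h v).getD 0 + 1 :=
      le_sup (f := fun v => (p.h v).getD 0 + 1) (mem_powerset.2 (subset_u_of_h_eq_some hv))
    _ ≤ freshBound t :=
      le_sup (f := fun q : PStar k => q.u.powerset.sup fun v => (q.h v).getD 0 + 1) hp

theorem AmalgamDom.biUnion_of_forall_eq {ι : Type*} [Fintype ι] {w : ι → Finset O1}
    (hw : ∀ i, AmalgamDom t (w i)) (heq : ∀ i j, w i = w j) :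
    AmalgamDom t (univ.biUnion w) := by
  refine ⟨biUnion_subset.2 fun i _ => (hw i).1, fun a ha haw haA => ?_⟩
  obtain ⟨x, hx⟩ := card_pos.1 (by rw [ha]; exact k.succ_pos)
  obtain ⟨i, -, hxi⟩ := mem_biUnion.1 (haw hx)
  exact (hw i).2 a ha (haw.trans (biUnion_subset.2 fun j _ => (heq j i).subset)) haA

theorem amalgamDom_of_amalgamH_eq_some (hv : amalgamH t v = some n) : AmalgamDom t v := by
  by_contra hdom
  simp [amalgamH, hdom] at hv

theorem amalgamH_eq_fresh (hv : amalgamH t v = some n) (hn : freshBound t ≤ n) :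
    n = freshBound t + label (amalgamU t).powerset v := by
  have hdom := amalgamDom_of_amalgamH_eq_some hv
  rw [amalgamH, if_pos hdom] at hv
  split_ifs at hv with hp
  · exact absurd (lt_freshBound hp.choose_spec.1 hv) hn.not_gt
  · exact (Option.some.inj hv).symm

theorem exists_h_eq_of_amalgamH_eq_some (hv : amalgamH t v = some n) (hn : n < freshBound t) :
    ∃ p ∈ t, p.h v = some n := by
  have hdom := amalgamDom_of_amalgamH_eq_some hv
  rw [amalgamH, if_pos hdom] at hv
  split_ifs at hv with hp
  · exact ⟨_, hp.choose_spec.1, hv⟩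
  · exact absurd (Option.some.inj hv ▸ hn) (Nat.le_add_right _ _).not_gt

variable (hal : ∀ p ∈ t, ∀ q ∈ t, Aligned p q)
include hal

theorem amalgamDom_of_isSome (hp : p ∈ t) (hv : (p.h v).isSome) : AmalgamDom t v := by
  obtain ⟨hvp, hfree⟩ := (p.hdom v).1 hv
  refine ⟨hvp.trans (u_subset_amalgamU hp), fun a ha hav haA => ?_⟩
  obtain ⟨q, hq, haq⟩ := mem_amalgamA.1 haA
  exact hfree a ha hav ((hal q hq p hp).mem_A haq (hav.trans hvp))

theorem amalgamH_eq_of_subset (hp : p ∈ t) (hvp : v ⊆ p.u) (hdom : AmalgamDom t v) :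
    amalgamH t v = p.h v := by
  have hv : ∃ p ∈ t, v ⊆ p.u := ⟨p, hp, hvp⟩
  rw [amalgamH, if_pos hdom, dif_pos hv]
  exact (hal _ hv.choose_spec.1 p hp).h_eq hv.choose_spec.2 hvp

theorem isSome_amalgamH_iff : (amalgamH t v).isSome ↔ AmalgamDom t v := by
  refine ⟨fun h => ?_, fun hdom => ?_⟩
  · obtain ⟨n, hn⟩ := Option.isSome_iff_exists.1 h
    exact amalgamDom_of_amalgamH_eq_some hn
  by_cases hv : ∃ p ∈ t, v ⊆ p.u
  · obtain ⟨p, hp, hvp⟩ := hv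
    rw [amalgamH_eq_of_subset hal hp hvp hdom, p.hdom]
    exact ⟨hvp, fun a ha hav haA => hdom.2 a ha hav (mem_amalgamA.2 ⟨p, hp, haA⟩)⟩
  · simp [amalgamH, hdom, hv]

theorem amalgamDom_biUnion_of_h_eq {w : Fin k → Finset O1} {P : Fin k → PStar k}
    (hP : ∀ i, P i ∈ t) (hw : ∀ i, (P i).h (w i) = some n) :
    AmalgamDom t (univ.biUnion w) := by
  have hwP i : w i ⊆ (P i).u := subset_u_of_h_eq_some (hw i)
  refine ⟨biUnion_subset.2 fun i _ => (hwP i).trans (u_subset_amalgamU (hP i)),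
    fun a ha haw haA => ?_⟩
  obtain ⟨q, hq, haq⟩ := mem_amalgamA.1 haA
  have hw' i : q.h (transport (P i) q (w i)) = some n :=
    (h_transport (hal _ (hP i) q hq).1 (hwP i)).trans (hw i)
  have haw' : a ⊆ univ.biUnion fun i => transport (P i) q (w i) := fun x hx => by
    obtain ⟨i, -, hxi⟩ := mem_biUnion.1 (haw hx)
    exact mem_biUnion.2 ⟨i, mem_univ i, (hal _ (hP i) q hq).inter_subset_transport (hwP i)
      (mem_inter.2 ⟨hxi, (q.hA a haq).1 hx⟩)⟩
  exact ((q.hdom _).1 (q.hlin _ n hw')).2 a ha haw' haq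

theorem amalgamDom_biUnion {w : Fin k → Finset O1} (hw : ∀ i, amalgamH t (w i) = some n) :
    AmalgamDom t (univ.biUnion w) := by
  have hdom i := amalgamDom_of_amalgamH_eq_some (hw i)
  rcases lt_or_ge n (freshBound t) with hn | hn
  · choose P hP hPw using fun i => exists_h_eq_of_amalgamH_eq_some (hw i) hn
    exact amalgamDom_biUnion_of_h_eq hal hP hPw
  · refine AmalgamDom.biUnion_of_forall_eq hdom fun i j => label_injOn _
      (mem_powerset.2 (hdom i).1) (mem_powerset.2 (hdom j).1) ?_
    exact Nat.add_left_cancel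
      ((amalgamH_eq_fresh (hw i) hn).symm.trans (amalgamH_eq_fresh (hw j) hn))

noncomputable def amalgam : PStar k where
  u := amalgamU t
  A := amalgamA t
  h := amalgamH t
  hA a ha := by
    obtain ⟨p, hp, hap⟩ := mem_amalgamA.1 ha
    exact ⟨(p.hA a hap).1.trans (u_subset_amalgamU hp), (p.hA a hap).2⟩
  hdom _ := isSome_amalgamH_iff hal
  hlin _ _ hw := (isSome_amalgamH_iff hal).2 (amalgamDom_biUnion hal hw)

theorem amalgam_le (hp : p ∈ t) : (amalgam hal).le p := by
  refine ⟨u_subset_amalgamU hp, fun a => ⟨?_, fun ⟨ha, hap⟩ => ?_⟩, fun v hv => ?_⟩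
  · exact fun ha => ⟨mem_amalgamA.2 ⟨p, hp, ha⟩, (p.hA a ha).1⟩
  · obtain ⟨q, hq, haq⟩ := mem_amalgamA.1 ha
    exact (hal q hq p hp).mem_A haq hap
  · exact amalgamH_eq_of_subset hal hp (subset_u_of_isSome hv) (amalgamDom_of_isSome hal hp hv)

end Amalgam

theorem exists_lower_bound_of_aligned {t : Finset (PStar k)}
    (hal : ∀ p ∈ t, ∀ q ∈ t, Aligned p q) : ∃ z : PStar k, ∀ p ∈ t, z.le p :=
  ⟨amalgam hal, fun _ => amalgam_le hal⟩

theorem aligned_of_inter_eq {p q : PStar k} {r : Finset O1}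
    (hs : p.shape = q.shape) (hr : ∀ x ∈ r, label p.u x = label q.u x)
    (hpq : p.u ≠ q.u → p.u ∩ q.u = r) : Aligned p q := by
  refine ⟨hs, fun x hxp hxq => ?_⟩
  by_cases hu : p.u = q.u
  · rw [hu]
  · exact hr x (hpq hu ▸ mem_inter.2 ⟨hxp, hxq⟩)

theorem precalibre : Precalibre (PStar.le (k := k)) := by
  intro S hS
  have hU : ¬(PStar.u '' S).Countable := fun hc => hS <|
    (hc.biUnion fun u _ => countable_setOf_u_eq u).mono fun p hp =>
      Set.mem_biUnion (Set.mem_image_of_mem PStar.u hp) (show p.u = p.u from rfl)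
  obtain ⟨T, hTS, hT, r, hr⟩ := exists_isDeltaSystem hU
  have hS₁ : ¬{p ∈ S | p.u ∈ T}.Countable := fun hc => hT <|
    (hc.image PStar.u).mono fun u hu => by
      obtain ⟨p, hp, rfl⟩ := hTS hu
      exact ⟨p, ⟨hp, hu⟩, rfl⟩
  obtain ⟨c, hc⟩ :=
    exists_not_countable_fiber hS₁ fun p => (p.shape, fun x : r => label p.u x)
  refine ⟨_, fun p hp => hp.1.1, hc, fun t ht => exists_lower_bound_of_aligned ?_⟩
  intro p hp q hq
  obtain ⟨⟨-, hpT⟩, hpc⟩ := ht hp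
  obtain ⟨⟨-, hqT⟩, hqc⟩ := ht hq
  obtain ⟨hs, hlabel⟩ := Prod.mk_inj.1 (hpc.trans hqc.symm)
  exact aligned_of_inter_eq hs (fun x hx => congrFun hlabel ⟨x, hx⟩) (hr hpT hqT)

noncomputable def ofFinset (u : Finset O1) : PStar k where
  u := u
  A := ∅
  h v := if v ⊆ u then some 0 else none
  hA := by simp
  hdom v := by by_cases hv : v ⊆ u <;> simp [hv]
  hlin w n hw := by
    have : univ.biUnion w ⊆ u := biUnion_subset.2 fun i _ => by
      by_contra hi
      simpa [hi] using hw i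
    simp [this]

theorem mk_eq_aleph_one : #(PStar k) = ℵ₁ := by
  have hfin : #(Finset O1) = ℵ₁ := by rw [mk_finset_of_infinite, mk_O1]
  refine le_antisymm ?_ (hfin ▸ mk_le_of_injective
    fun u v (h : ofFinset (k := k) u = ofFinset v) => congrArg PStar.u h)
  calc #(PStar k) ≤ #(Finset O1) * ℵ₀ := mk_le_mk_mul_of_mk_preimage_le PStar.u fun u =>
        le_aleph0_iff_set_countable.2 (countable_setOf_u_eq u)
    _ = ℵ₁ := by rw [hfin, mul_aleph0_eq (aleph0_le_aleph 1)]

end PStar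

theorem pstar_precalibre_and_card_general (k : ℕ) :
    Precalibre (PStar.le (k := k)) ∧ Cardinal.mk (PStar k) = Cardinal.aleph 1 :=
  ⟨PStar.precalibre, PStar.mk_eq_aleph_one⟩

/-- For every `k ≥ 2`, the poset `P_*^k` has precalibre-`ℵ₁` and has
cardinality `ℵ₁`. -/
theorem pstar_precalibre_and_card (k : ℕ) (hk : 2 ≤ k) :
    Precalibre (PStar.le (k := k)) ∧ Cardinal.mk (PStar k) = Cardinal.aleph 1 :=
  pstar_precalibre_and_card_general k
end

section
/- Let (T, <_T) be a partially ordered set containing an uncountable chain, and let b be any function from the set of 2-element <_T-comparable subsets of T to {0,1}. Then the product poset P₀ × P₁ (with coordinatewise order) is not ccc: the pairs ((({η}, c_η)), (({η}, c_η))) for η ranging over the uncountable chain, where c_η is the function on {η} with value 0, form an uncountable antichain in P₀ × P₁. -/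
/-- Two elements are comparable when one is strictly below the other. -/
def Comparable {X : Type*} (lt : X → X → Prop) (η ν : X) : Prop := lt η ν ∨ lt ν η

/-- The conditions of the poset `P_ℓ`: pairs `(w, c)` with `w` a finite subset
of `X` and `c : w → ω` such that `c η ≠ c ν` for every comparable pair
`{η, ν} ⊆ w` with `b {η, ν} = ℓ`. -/
def PCond {X : Type*} (lt : X → X → Prop) (b : Set X → Fin 2) (ℓ : Fin 2) :=
  {p : Σ w : Finset X, {x : X // x ∈ w} → ℕ //
    ∀ (η ν : X) (hη : η ∈ p.1) (hν : ν ∈ p.1), η ≠ ν → Comparable lt η ν →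
      b {η, ν} = ℓ → p.2 ⟨η, hη⟩ ≠ p.2 ⟨ν, hν⟩}

/-- The order of `P_ℓ`: `(w', c') ≤ (w, c)` iff `w ⊆ w'` and `c'` extends `c`. -/
def PCond.le {X : Type*} {lt : X → X → Prop} {b : Set X → Fin 2} {ℓ : Fin 2}
    (p q : PCond lt b ℓ) : Prop :=
  ∃ hsub : q.1.1 ⊆ p.1.1, ∀ (x : X) (hx : x ∈ q.1.1),
    p.1.2 ⟨x, hsub hx⟩ = q.1.2 ⟨x, hx⟩

/-- The condition `({η}, c_η)` where `c_η` is the function on `{η}` with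
constant value `0`. -/
def singletonCond {X : Type*} (lt : X → X → Prop) (b : Set X → Fin 2) (ℓ : Fin 2)
    (η : X) : PCond lt b ℓ :=
  ⟨⟨{η}, fun _ => 0⟩, fun η' ν hη' hν hne _ _ => absurd
    ((Finset.mem_singleton.1 hη').trans (Finset.mem_singleton.1 hν).symm) hne⟩

/-!
In `P_ℓ` two singleton conditions `({η}, 0)` and `({ν}, 0)` with `η ≠ ν` comparable and
`b {η, ν} = ℓ` are incompatible: a common extension would colour `η` and `ν` alike. Since
`b {η, ν}` is `0` or `1`, the pairs indexed by distinct points of a chain are incompatible in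
one of the two coordinates, and there are as many of them as points of the chain.
-/

namespace PCond

variable {X : Type*} {lt : X → X → Prop} {b : Set X → Fin 2} {ℓ : Fin 2}

def Compatible (p q : PCond lt b ℓ) : Prop := ∃ r, PCond.le r p ∧ PCond.le r q

theorem singletonCond_injective (lt : X → X → Prop) (b : Set X → Fin 2) (ℓ : Fin 2) :
    Function.Injective (singletonCond lt b ℓ) := fun η ν h => by
  simpa [singletonCond] using congrArg (fun p => p.1.1) h

theorem not_compatible_singletonCond {η ν : X} (hne : η ≠ ν) (hcomp : Comparable lt η ν)
    (hb : b {η, ν} = ℓ) : ¬ (singletonCond lt b ℓ η).Compatible (singletonCond lt b ℓ ν) := by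
  rintro ⟨r, ⟨_, hextη⟩, ⟨_, hextν⟩⟩
  have hcolη := hextη η (Finset.mem_singleton_self η)
  have hcolν := hextν ν (Finset.mem_singleton_self ν)
  exact r.2 η ν _ _ hne hcomp hb (hcolη.trans hcolν.symm)

theorem not_compatible_singletonCond_pair {η ν : X} (hne : η ≠ ν) (hcomp : Comparable lt η ν) :
    ¬ ((singletonCond lt b 0 η).Compatible (singletonCond lt b 0 ν) ∧
      (singletonCond lt b 1 η).Compatible (singletonCond lt b 1 ν)) := by
  rintro ⟨h₀, h₁⟩
  rcases Fin.exists_fin_two.mp ⟨b {η, ν}, rfl⟩ with hb | hb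
  · exact not_compatible_singletonCond hne hcomp hb h₀
  · exact not_compatible_singletonCond hne hcomp hb h₁

end PCond

open PCond in
/-- If `(T, <_T)` is a partially ordered set containing an uncountable chain `C`,
and `b` is any `{0,1}`-colouring of the comparable pairs, then the pairs
`(({η}, c_η), ({η}, c_η))` for `η ∈ C` form an uncountable antichain of the
product poset `P₀ × P₁` (where compatibility in the product is coordinatewise);
in particular `P₀ × P₁` is not ccc. -/
theorem product_not_ccc {X : Type*} [PartialOrder X]
    (C : Set X) (hC : ¬C.Countable)
    (hchain : ∀ x ∈ C, ∀ y ∈ C, x ≠ y → x < y ∨ y < x)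
    (b : Set X → Fin 2) :
    ¬(∀ A : Set (PCond (· < ·) b 0 × PCond (· < ·) b 1),
        (∀ p ∈ A, ∀ q ∈ A, p ≠ q →
          ¬((∃ r, PCond.le r p.1 ∧ PCond.le r q.1) ∧
            (∃ r, PCond.le r p.2 ∧ PCond.le r q.2))) → A.Countable) ∧
    ¬((fun η : X => (singletonCond (· < ·) b 0 η, singletonCond (· < ·) b 1 η))
        '' C).Countable ∧
    ∀ p ∈ (fun η : X => (singletonCond (· < ·) b 0 η,
            singletonCond (· < ·) b 1 η)) '' C,
      ∀ q ∈ (fun η : X => (singletonCond (· < ·) b 0 η,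
            singletonCond (· < ·) b 1 η)) '' C,
        p ≠ q →
          ¬((∃ r, PCond.le r p.1 ∧ PCond.le r q.1) ∧
            (∃ r, PCond.le r p.2 ∧ PCond.le r q.2)) := by
  set f := fun η : X => (singletonCond (· < ·) b 0 η, singletonCond (· < ·) b 1 η)
  have hf : Function.Injective f := fun η ν h =>
    singletonCond_injective _ b 0 (congrArg Prod.fst h)
  have hantichain : ∀ p ∈ f '' C, ∀ q ∈ f '' C, p ≠ q →
      ¬((∃ r, PCond.le r p.1 ∧ PCond.le r q.1) ∧ (∃ r, PCond.le r p.2 ∧ PCond.le r q.2)) := by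
    rintro p ⟨η, hη, rfl⟩ q ⟨ν, hν, rfl⟩ hpq
    have hne : η ≠ ν := fun h => hpq (congrArg f h)
    exact not_compatible_singletonCond_pair hne (hchain η hη ν hν hne)
  have huncountable : ¬(f '' C).Countable := fun h =>
    hC ((Set.mapsTo_image f C).countable_of_injOn hf.injOn h)
  exact ⟨fun hccc => huncountable (hccc _ hantichain), huncountable, hantichain⟩
end
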